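/- arXiv:math/0607425 — 3 statements merged into one kernel-verified Lean document; each statement's English description precedes it below -/
import Mathlib

section
/- Transfer lemma for reparametrized control systems (second inclusion of Lemma comparaison): with notation as before, fix η > 0, 0 < T₀ ≤ T/√(1+η²), and S ∈ [T₀, T/√(1+η²)]. If x₁ is reachable at time S by a trajectory of ẏ = f₀(y) + w f₁(y), y(0)=0, with |w| ≤ η, then x₁ is reachable at time T by a trajectory of ẋ = v f₀(x) + u f₁(x), x(0)=0, with controls satisfying v² + u² ≤ 1, 1−α ≤ v ≤ 1, |u| ≤ α, where α = max(1 − T₀/T, η/√(1+η²)). -/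
open MeasureTheory

/-- Second inclusion of the comparison lemma: a point reachable at time
`S ∈ [T₀, T/√(1+η²)]` by the affine system `ẏ = f₀(y) + w f₁(y)`, `|w| ≤ η`,
is reachable at time `T` by the system `ẋ = v f₀(x) + u f₁(x)` with
`v² + u² ≤ 1`, `1 − α ≤ v ≤ 1`, `|u| ≤ α`, where
`α = max (1 − T₀/T) (η/√(1+η²))`. -/
theorem reachable_affine_subset_SR (n : ℕ)
    (f₀ f₁ : EuclideanSpace ℝ (Fin n) → EuclideanSpace ℝ (Fin n))
    (hf₀ : ContDiff ℝ (⊤ : ℕ∞) f₀) (hf₁ : ContDiff ℝ (⊤ : ℕ∞) f₁)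
    (T T₀ η S : ℝ) (hT : 0 < T) (hη : 0 < η)
    (hT₀pos : 0 < T₀) (hT₀ : T₀ ≤ T / Real.sqrt (1 + η ^ 2))
    (hS : S ∈ Set.Icc T₀ (T / Real.sqrt (1 + η ^ 2)))
    (y : ℝ → EuclideanSpace ℝ (Fin n)) (w : ℝ → ℝ)
    (hw : Measurable w) (hwb : ∀ s ∈ Set.Icc (0:ℝ) S, |w s| ≤ η)
    (hy0 : y 0 = 0)
    (hycont : ContinuousOn y (Set.Icc (0:ℝ) S))
    (hode : ∀ᵐ s ∂(volume.restrict (Set.Icc (0:ℝ) S)),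
      HasDerivAt y (f₀ (y s) + w s • f₁ (y s)) s)
    (x₁ : EuclideanSpace ℝ (Fin n)) (hx₁ : y S = x₁) :
    ∃ (v u : ℝ → ℝ) (x : ℝ → EuclideanSpace ℝ (Fin n)),
      Measurable v ∧ Measurable u ∧
      (∀ t ∈ Set.Icc (0:ℝ) T,
        (v t) ^ 2 + (u t) ^ 2 ≤ 1 ∧
        1 - max (1 - T₀ / T) (η / Real.sqrt (1 + η ^ 2)) ≤ v t ∧ v t ≤ 1 ∧
        |u t| ≤ max (1 - T₀ / T) (η / Real.sqrt (1 + η ^ 2))) ∧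
      x 0 = 0 ∧ ContinuousOn x (Set.Icc (0:ℝ) T) ∧
      (∀ᵐ t ∂(volume.restrict (Set.Icc (0:ℝ) T)),
        HasDerivAt x (v t • f₀ (x t) + u t • f₁ (x t)) t) ∧
      x T = x₁ := by
  set c : ℝ := S / T with hc_def
  have hsq : (1:ℝ) ≤ Real.sqrt (1 + η ^ 2) := by
    have h := Real.sqrt_le_sqrt (show (1:ℝ) ≤ 1 + η ^ 2 by nlinarith [sq_nonneg η])
    simpa using h
  have hsqpos : 0 < Real.sqrt (1 + η ^ 2) := lt_of_lt_of_le one_pos hsq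
  have hSpos : 0 < S := lt_of_lt_of_le hT₀pos hS.1
  have hc0 : 0 < c := div_pos hSpos hT
  have hcle : c ≤ 1 / Real.sqrt (1 + η ^ 2) := by
    rw [hc_def, div_le_div_iff₀ hT hsqpos]
    calc S * Real.sqrt (1 + η ^ 2)
        ≤ (T / Real.sqrt (1 + η ^ 2)) * Real.sqrt (1 + η ^ 2) := by
          exact mul_le_mul_of_nonneg_right hS.2 hsqpos.le
      _ = T := by field_simp
      _ = 1 * T := (one_mul T).symm
  have hc1 : c ≤ 1 := hcle.trans (by
    rw [div_le_one hsqpos]; exact hsq)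
  -- maps Icc 0 T to Icc 0 S
  have hmaps : ∀ t ∈ Set.Icc (0:ℝ) T, c * t ∈ Set.Icc (0:ℝ) S := by
    intro t ht
    constructor
    · exact mul_nonneg hc0.le ht.1
    · calc c * t ≤ c * T := mul_le_mul_of_nonneg_left ht.2 hc0.le
        _ = S := by rw [hc_def]; field_simp
  have hcT : c * T = S := by rw [hc_def]; field_simp
  refine ⟨fun _ => c, fun t => c * w (c * t), fun t => y (c * t),
    measurable_const, measurable_const.mul (hw.comp (measurable_const_mul c)),
    ?_, ?_, ?_, ?_, ?_⟩
  · intro t ht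
    have hwt := hwb (c * t) (hmaps t ht)
    have hc2 : c ^ 2 ≤ 1 / (1 + η ^ 2) := by
      have := pow_le_pow_left₀ hc0.le hcle 2
      simpa [div_pow, Real.sq_sqrt (by positivity : (0:ℝ) ≤ 1 + η ^ 2)] using this
    refine ⟨?_, ?_, hc1, ?_⟩
    · have : (c * w (c * t)) ^ 2 ≤ c ^ 2 * η ^ 2 := by
        rw [mul_pow]
        exact mul_le_mul_of_nonneg_left (by
          rw [← sq_abs]; exact pow_le_pow_left₀ (abs_nonneg _) hwt 2) (by positivity)
      calc c ^ 2 + (c * w (c * t)) ^ 2 ≤ c ^ 2 + c ^ 2 * η ^ 2 := by linarith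
        _ = c ^ 2 * (1 + η ^ 2) := by ring
        _ ≤ (1 / (1 + η ^ 2)) * (1 + η ^ 2) :=
            mul_le_mul_of_nonneg_right hc2 (by positivity)
        _ = 1 := by field_simp
    · have h1 : T₀ / T ≤ c := by
        rw [hc_def]; gcongr; exact hS.1
      have h2 := le_max_left (1 - T₀ / T) (η / Real.sqrt (1 + η ^ 2))
      linarith
    · calc |c * w (c * t)| = c * |w (c * t)| := by
            rw [abs_mul, abs_of_nonneg hc0.le]
        _ ≤ (1 / Real.sqrt (1 + η ^ 2)) * η :=
            mul_le_mul hcle hwt (abs_nonneg _) (by positivity)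
        _ = η / Real.sqrt (1 + η ^ 2) := by ring
        _ ≤ _ := le_max_right _ _
  · simp [hy0]
  · exact hycont.comp (continuous_const.mul continuous_id).continuousOn hmaps
  · -- derivative a.e.
    set E : Set ℝ := {s | HasDerivAt y (f₀ (y s) + w s • f₁ (y s)) s} with hE
    have h0 : volume (Eᶜ ∩ Set.Icc (0:ℝ) S) = 0 := by
      have := hode
      rw [ae_iff] at this
      rwa [Measure.restrict_apply' measurableSet_Icc] at this
    have hpre : volume ((fun t => c * t) ⁻¹' (Eᶜ ∩ Set.Icc (0:ℝ) S)) = 0 := by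
      rw [show (fun t => c * t) = (c * ·) from rfl,
        Real.volume_preimage_mul_left (ne_of_gt hc0), h0, mul_zero]
    rw [ae_iff, Measure.restrict_apply' measurableSet_Icc]
    refine measure_mono_null ?_ hpre
    intro t ht
    simp only [Set.mem_inter_iff, Set.mem_setOf_eq, not_forall] at ht ⊢
    obtain ⟨hnot, htT⟩ := ht
    refine ⟨fun hmem => hnot ?_, hmaps t htT⟩
    have hlin : HasDerivAt (fun t : ℝ => c * t) c t := by
      simpa using (hasDerivAt_id t).const_mul c
    have hd : HasDerivAt (fun t => y (c * t))
        (c • (f₀ (y (c * t)) + w (c * t) • f₁ (y (c * t)))) t :=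
      HasDerivAt.scomp t hmem hlin
    simpa [smul_add, smul_smul] using hd
  · show y (c * T) = x₁
    rw [hcT]; exact hx₁
end

section
/- Coercivity of the relaxed quadratic form via Poincaré (used for point 2 of Theorem bordaffine): let b : [0,T] → ℝ be continuous with b(t) ≥ β₀ > 0 on [0,T], n ≥ 3, and consider Q(ξ) = ∫₀ᵀ Σ_{i,j=1}^{n−2} b_{ij}(t) ξ^{(i)}(t) ξ^{(j)}(t) dt with b_{n−2,n−2} = b and all b_{ij} continuous. Then there exists T₀ > 0 and β > 0 such that for all 0 < T ≤ T₀ and all ξ with ξ^{(i)}(0) = 0, i = 1,…,n−2, and ξ^{(n−2)} ∈ L²([0,T]): Q(ξ) ≥ β ∫₀ᵀ (ξ^{(n−2)}(t))² dt. -/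
open MeasureTheory intervalIntegral

/-- Elementary Cauchy–Schwarz on an interval: `(∫|g|)² ≤ T ∫ g²`. -/
private lemma cs_aux (T : ℝ) (hT : 0 < T) (g : ℝ → ℝ) (hg : Continuous g) :
    (∫ t in (0:ℝ)..T, |g t|) ^ 2 ≤ T * ∫ t in (0:ℝ)..T, (g t) ^ 2 := by
  set A := ∫ t in (0:ℝ)..T, |g t| with hAdef
  set S := ∫ t in (0:ℝ)..T, (g t) ^ 2 with hSdef
  set c := A / T with hcdef
  have hint1 : IntervalIntegrable (fun t => (g t) ^ 2) volume 0 T :=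
    (hg.pow 2).intervalIntegrable _ _
  have hint2 : IntervalIntegrable (fun t => (2 * c) * |g t|) volume 0 T :=
    (continuous_const.mul hg.abs).intervalIntegrable _ _
  have h0 : 0 ≤ ∫ t in (0:ℝ)..T, (|g t| - c) ^ 2 :=
    intervalIntegral.integral_nonneg hT.le (fun u _ => sq_nonneg _)
  have hfun : (fun t => (|g t| - c) ^ 2)
      = fun t => ((g t) ^ 2 - (2 * c) * |g t|) + c ^ 2 := by
    funext t
    have h := sq_abs (g t)
    calc (|g t| - c) ^ 2 = |g t| ^ 2 - (2 * c) * |g t| + c ^ 2 := by ring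
      _ = ((g t) ^ 2 - (2 * c) * |g t|) + c ^ 2 := by rw [h]
  rw [hfun, intervalIntegral.integral_add (hint1.sub hint2) intervalIntegrable_const,
    intervalIntegral.integral_sub hint1 hint2, intervalIntegral.integral_const_mul,
    intervalIntegral.integral_const, smul_eq_mul, sub_zero] at h0
  have hcT : c * T = A := div_mul_cancel₀ A hT.ne'
  nlinarith [h0, hcT, hT, sq_nonneg c]

/-- `-(M x y) ≤ b d₁ d₂` when `|b| ≤ M`, `|d₁| ≤ x`, `|d₂| ≤ y`. -/
private lemma mul3_lb {b d1 d2 M x y : ℝ} (hb : |b| ≤ M) (h1 : |d1| ≤ x) (h2 : |d2| ≤ y)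
    (hx : 0 ≤ x) (hy : 0 ≤ y) : -(M * x * y) ≤ b * d1 * d2 := by
  have hM : 0 ≤ M := (abs_nonneg b).trans hb
  have habs : |b * d1 * d2| ≤ M * x * y := by
    rw [abs_mul, abs_mul]
    exact mul_le_mul (mul_le_mul hb h1 (abs_nonneg _) hM) h2 (abs_nonneg _)
      (mul_nonneg hM hx)
  linarith [neg_abs_le (b * d1 * d2)]

set_option maxHeartbeats 1000000 in
/-- Coercivity of the quadratic form `Q(ξ) = ∫₀ᵀ Σ bᵢⱼ ξ⁽ⁱ⁾ξ⁽ʲ⁾` for small `T`: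
if the leading coefficient `b_{n-2,n-2}` is bounded below by `β₀ > 0` on a fixed
horizon `[0, T₁]`, then there are `T₀ > 0` and `β > 0` such that, for every
`0 < T ≤ min T₀ T₁` and every `ξ` with `ξ⁽ⁱ⁾(0) = 0`, `i = 1,…,n−2`,
`Q(ξ) ≥ β ∫₀ᵀ (ξ⁽ⁿ⁻²⁾)²`. -/
theorem quadratic_form_coercive_small_time (n : ℕ) (hn : 3 ≤ n) (T₁ : ℝ) (hT₁ : 0 < T₁)
    (b : ℕ → ℕ → ℝ → ℝ) (hbcont : ∀ i j, Continuous (b i j))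
    (β₀ : ℝ) (hβ₀ : 0 < β₀)
    (hb : ∀ t ∈ Set.Icc (0:ℝ) T₁, β₀ ≤ b (n - 2) (n - 2) t) :
    ∃ T₀ > 0, ∃ β > 0, ∀ T : ℝ, 0 < T → T ≤ T₀ → T ≤ T₁ →
      ∀ ξ : ℝ → ℝ, ContDiff ℝ (n - 2 : ℕ) ξ →
        (∀ i, 1 ≤ i → i ≤ n - 2 → iteratedDeriv i ξ 0 = 0) →
        (∫ t in (0:ℝ)..T, ∑ i ∈ Finset.Icc 1 (n - 2), ∑ j ∈ Finset.Icc 1 (n - 2),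
            b i j t * iteratedDeriv i ξ t * iteratedDeriv j ξ t) ≥
          β * ∫ t in (0:ℝ)..T, (iteratedDeriv (n - 2) ξ t) ^ 2 := by
  set m := n - 2 with hmdef
  have hm1 : 1 ≤ m := by omega
  -- A uniform bound `M` for all the coefficients on `[0, T₁]`.
  have hFcont : Continuous (fun t => ∑ i ∈ Finset.Icc 1 m, ∑ j ∈ Finset.Icc 1 m, |b i j t|) :=
    continuous_finset_sum _ fun i _ => continuous_finset_sum _ fun j _ => (hbcont i j).abs
  obtain ⟨t₀, ht₀, hMax⟩ := (isCompact_Icc (a := (0:ℝ)) (b := T₁)).exists_isMaxOn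
    ⟨0, Set.left_mem_Icc.mpr hT₁.le⟩ hFcont.continuousOn
  have hM : ∀ t ∈ Set.Icc (0:ℝ) T₁,
      (∑ i ∈ Finset.Icc 1 m, ∑ j ∈ Finset.Icc 1 m, |b i j t|) ≤
      ∑ i ∈ Finset.Icc 1 m, ∑ j ∈ Finset.Icc 1 m, |b i j t₀| := fun t ht => hMax ht
  set M := ∑ i ∈ Finset.Icc 1 m, ∑ j ∈ Finset.Icc 1 m, |b i j t₀| with hMdef
  have hMnn : 0 ≤ M :=
    Finset.sum_nonneg fun _ _ => Finset.sum_nonneg fun _ _ => abs_nonneg _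
  have hMb : ∀ i j, 1 ≤ i → i ≤ m → 1 ≤ j → j ≤ m →
      ∀ t ∈ Set.Icc (0:ℝ) T₁, |b i j t| ≤ M := by
    intro i j hi1 him hj1 hjm t ht
    have hi : i ∈ Finset.Icc 1 m := Finset.mem_Icc.mpr ⟨hi1, him⟩
    have hj : j ∈ Finset.Icc 1 m := Finset.mem_Icc.mpr ⟨hj1, hjm⟩
    calc |b i j t| ≤ ∑ j' ∈ Finset.Icc 1 m, |b i j' t| :=
          Finset.single_le_sum (f := fun j' => |b i j' t|) (fun _ _ => abs_nonneg _) hj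
      _ ≤ ∑ i' ∈ Finset.Icc 1 m, ∑ j' ∈ Finset.Icc 1 m, |b i' j' t| :=
          Finset.single_le_sum (f := fun i' => ∑ j' ∈ Finset.Icc 1 m, |b i' j' t|)
            (fun i' _ => Finset.sum_nonneg fun _ _ => abs_nonneg _) hi
      _ ≤ M := hM t ht
  set C := 2 * (m : ℝ) ^ 2 * (M + 1) with hCdef
  have hmR : (1 : ℝ) ≤ (m : ℝ) := by exact_mod_cast hm1
  have hC : 0 < C := by positivity
  refine ⟨min 1 (β₀ / (2 * C)), lt_min one_pos (by positivity), β₀ / 2, by positivity, ?_⟩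
  intro T hT hTle hTT₁ ξ hξ hzero
  have hT1 : T ≤ 1 := hTle.trans (min_le_left _ _)
  have hTC : T ≤ β₀ / (2 * C) := hTle.trans (min_le_right _ _)
  have hCT : C * T ≤ β₀ / 2 := by
    rw [le_div_iff₀ (by positivity : (0:ℝ) < 2 * C)] at hTC
    nlinarith
  -- Basic facts about the iterated derivatives.
  have hDcont : ∀ i, i ≤ m → Continuous (iteratedDeriv i ξ) := fun i hi =>
    hξ.continuous_iteratedDeriv i (by exact_mod_cast hi)
  have hDderiv : ∀ i, i < m → ∀ t : ℝ,
      HasDerivAt (iteratedDeriv i ξ) (iteratedDeriv (i + 1) ξ t) t := by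
    intro i hi t
    have hd : DifferentiableAt ℝ (iteratedDeriv i ξ) t :=
      (hξ.differentiable_iteratedDeriv i (by exact_mod_cast hi)).differentiableAt
    rw [iteratedDeriv_succ]
    exact hd.hasDerivAt
  have hFTC : ∀ i, 1 ≤ i → i < m → ∀ t : ℝ,
      iteratedDeriv i ξ t = ∫ u in (0:ℝ)..t, iteratedDeriv (i + 1) ξ u := by
    intro i h1 h2 t
    have h := intervalIntegral.integral_eq_sub_of_hasDerivAt
      (f := iteratedDeriv i ξ) (f' := iteratedDeriv (i + 1) ξ) (a := (0:ℝ)) (b := t)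
      (fun u _ => hDderiv i h2 u) ((hDcont (i + 1) h2).intervalIntegrable 0 t)
    rw [h, hzero i h1 h2.le, sub_zero]
  set g := iteratedDeriv m ξ with hgdef
  have hgc : Continuous g := hDcont m le_rfl
  set A := ∫ t in (0:ℝ)..T, |g t| with hAdef
  set S := ∫ t in (0:ℝ)..T, (g t) ^ 2 with hSdef
  have hAnn : 0 ≤ A := intervalIntegral.integral_nonneg hT.le fun u _ => abs_nonneg _
  have hSnn : 0 ≤ S := intervalIntegral.integral_nonneg hT.le fun u _ => sq_nonneg _
  have hCS : A ^ 2 ≤ T * S := cs_aux T hT g hgc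
  -- Sup bounds on the lower-order derivatives.
  have hbdk : ∀ k i, 1 ≤ i → i + k + 1 = m → ∀ t ∈ Set.Icc (0:ℝ) T,
      |iteratedDeriv i ξ t| ≤ A := by
    intro k
    induction k with
    | zero =>
      intro i h1 hik t ht
      have him : i < m := by omega
      rw [hFTC i h1 him t]
      calc |∫ u in (0:ℝ)..t, iteratedDeriv (i + 1) ξ u|
          ≤ ∫ u in (0:ℝ)..t, |iteratedDeriv (i + 1) ξ u| :=
            intervalIntegral.abs_integral_le_integral_abs ht.1
        _ ≤ A := by
            have hik' : i + 1 = m := by omega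
            rw [hik']
            exact intervalIntegral.integral_mono_interval le_rfl ht.1 ht.2
              (Filter.Eventually.of_forall fun u => abs_nonneg _)
              (hgc.abs.intervalIntegrable 0 T)
    | succ k ih =>
      intro i h1 hik t ht
      have him : i < m := by omega
      have hnext : ∀ u ∈ Set.Icc (0:ℝ) T, |iteratedDeriv (i + 1) ξ u| ≤ A :=
        ih (i + 1) (by omega) (by omega)
      rw [hFTC i h1 him t]
      calc |∫ u in (0:ℝ)..t, iteratedDeriv (i + 1) ξ u|
          ≤ ∫ u in (0:ℝ)..t, |iteratedDeriv (i + 1) ξ u| :=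
            intervalIntegral.abs_integral_le_integral_abs ht.1
        _ ≤ ∫ u in (0:ℝ)..t, A :=
            intervalIntegral.integral_mono_on ht.1
              ((hDcont (i + 1) (by omega)).abs.intervalIntegrable 0 t)
              intervalIntegrable_const
              (fun u hu => hnext u ⟨hu.1, hu.2.trans ht.2⟩)
        _ = t * A := by simp
        _ ≤ 1 * A := mul_le_mul_of_nonneg_right (ht.2.trans hT1) hAnn
        _ = A := one_mul A
  have hbd2 : ∀ i, 1 ≤ i → i < m → ∀ t ∈ Set.Icc (0:ℝ) T, |iteratedDeriv i ξ t| ≤ A :=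
    fun i h1 h2 => hbdk (m - i - 1) i h1 (by omega)
  have hbd3 : ∀ j, 1 ≤ j → j ≤ m → ∀ t ∈ Set.Icc (0:ℝ) T,
      |iteratedDeriv j ξ t| ≤ A + |g t| := by
    intro j h1 h2 t ht
    rcases eq_or_lt_of_le h2 with h | h
    · subst h
      have h' : |iteratedDeriv m ξ t| ≤ A + |iteratedDeriv m ξ t| :=
        le_add_of_nonneg_left hAnn
      simpa [hgdef] using h'
    · exact (hbd2 j h1 h t ht).trans (le_add_of_nonneg_right (abs_nonneg _))
  -- Pointwise lower bound on the integrand.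
  have hpt : ∀ t ∈ Set.Icc (0:ℝ) T,
      β₀ * (g t) ^ 2 - (m : ℝ) ^ 2 * M * A * A - (m : ℝ) ^ 2 * M * A * |g t| ≤
        ∑ i ∈ Finset.Icc 1 m, ∑ j ∈ Finset.Icc 1 m,
          b i j t * iteratedDeriv i ξ t * iteratedDeriv j ξ t := by
    intro t ht
    have htT₁ : t ∈ Set.Icc (0:ℝ) T₁ := ⟨ht.1, ht.2.trans hTT₁⟩
    classical
    set s : Finset (ℕ × ℕ) := Finset.Icc 1 m ×ˢ Finset.Icc 1 m with hs
    have hmem : (m, m) ∈ s := by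
      simp [hs, Finset.mem_product, Finset.mem_Icc, hm1]
    have hsum : (∑ i ∈ Finset.Icc 1 m, ∑ j ∈ Finset.Icc 1 m,
        b i j t * iteratedDeriv i ξ t * iteratedDeriv j ξ t)
        = b m m t * iteratedDeriv m ξ t * iteratedDeriv m ξ t +
          ∑ p ∈ s.erase (m, m), b p.1 p.2 t * iteratedDeriv p.1 ξ t * iteratedDeriv p.2 ξ t := by
      rw [← Finset.sum_product' (s := Finset.Icc 1 m) (t := Finset.Icc 1 m)
        (f := fun i j => b i j t * iteratedDeriv i ξ t * iteratedDeriv j ξ t),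
        ← Finset.add_sum_erase s _ hmem]
    have htop : β₀ * (g t) ^ 2 ≤ b m m t * iteratedDeriv m ξ t * iteratedDeriv m ξ t := by
      have hbm : β₀ ≤ b m m t := hb t htT₁
      have hg2 : (0:ℝ) ≤ (g t) ^ 2 := sq_nonneg _
      calc β₀ * (g t) ^ 2 ≤ b m m t * (g t) ^ 2 := mul_le_mul_of_nonneg_right hbm hg2
        _ = b m m t * iteratedDeriv m ξ t * iteratedDeriv m ξ t := by rw [hgdef]; ring
    have hterm : ∀ p ∈ s.erase (m, m), -(M * A * (A + |g t|)) ≤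
        b p.1 p.2 t * iteratedDeriv p.1 ξ t * iteratedDeriv p.2 ξ t := by
      intro p hp
      obtain ⟨hne, hps⟩ := Finset.mem_erase.mp hp
      rw [hs, Finset.mem_product, Finset.mem_Icc, Finset.mem_Icc] at hps
      obtain ⟨⟨h11, h12⟩, h21, h22⟩ := hps
      have hbM : |b p.1 p.2 t| ≤ M := hMb p.1 p.2 h11 h12 h21 h22 t htT₁
      have hAg : 0 ≤ A + |g t| := by positivity
      by_cases h1m : p.1 = m
      · have h2m : p.2 < m := by
          rcases eq_or_lt_of_le h22 with h | h
          · exact absurd (Prod.ext h1m h) hne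
          · exact h
        have hx := hbd3 p.1 h11 h12 t ht
        have hy := hbd2 p.2 h21 h2m t ht
        have := mul3_lb hbM hx hy hAg hAnn
        nlinarith [this]
      · have h1m' : p.1 < m := lt_of_le_of_ne h12 h1m
        have hx := hbd2 p.1 h11 h1m' t ht
        have hy := hbd3 p.2 h21 h22 t ht
        exact mul3_lb hbM hx hy hAnn hAg
    have hcard : ((s.erase (m, m)).card : ℝ) ≤ (m : ℝ) ^ 2 := by
      have h1 : (s.erase (m, m)).card ≤ s.card := Finset.card_erase_le
      have h2 : s.card = m * m := by
        rw [hs, Finset.card_product, Nat.card_Icc]; simp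
      have h3 : (s.erase (m, m)).card ≤ m * m := by omega
      calc ((s.erase (m, m)).card : ℝ) ≤ ((m * m : ℕ) : ℝ) := by exact_mod_cast h3
        _ = (m : ℝ) ^ 2 := by push_cast; ring
    have hsumlb := Finset.card_nsmul_le_sum (s.erase (m, m))
      (fun p => b p.1 p.2 t * iteratedDeriv p.1 ξ t * iteratedDeriv p.2 ξ t)
      (-(M * A * (A + |g t|))) hterm
    rw [nsmul_eq_mul] at hsumlb
    have hcnn : 0 ≤ M * A * (A + |g t|) := by
      have : 0 ≤ A + |g t| := by positivity
      exact mul_nonneg (mul_nonneg hMnn hAnn) this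
    have hlb2 : (m : ℝ) ^ 2 * (-(M * A * (A + |g t|))) ≤
        ((s.erase (m, m)).card : ℝ) * (-(M * A * (A + |g t|))) :=
      mul_le_mul_of_nonpos_right hcard (by linarith)
    rw [hsum]
    linarith [hsumlb, hlb2, htop]
  -- Integrate the pointwise bound.
  have hQcont : Continuous (fun t => ∑ i ∈ Finset.Icc 1 m, ∑ j ∈ Finset.Icc 1 m,
      b i j t * iteratedDeriv i ξ t * iteratedDeriv j ξ t) :=
    continuous_finset_sum _ fun i hi => continuous_finset_sum _ fun j hj =>
      (((hbcont i j).mul (hDcont i (Finset.mem_Icc.mp hi).2)).mul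
        (hDcont j (Finset.mem_Icc.mp hj).2))
  have hLint1 : IntervalIntegrable (fun t => β₀ * (g t) ^ 2) volume 0 T :=
    (continuous_const.mul (hgc.pow 2)).intervalIntegrable _ _
  have hLint2 : IntervalIntegrable (fun t => (m : ℝ) ^ 2 * M * A * |g t|) volume 0 T :=
    (continuous_const.mul hgc.abs).intervalIntegrable _ _
  have hLcont : IntervalIntegrable (fun t => β₀ * (g t) ^ 2 - (m : ℝ) ^ 2 * M * A * A
      - (m : ℝ) ^ 2 * M * A * |g t|) volume 0 T :=
    (hLint1.sub intervalIntegrable_const).sub hLint2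
  have hmono := intervalIntegral.integral_mono_on hT.le hLcont
    (hQcont.intervalIntegrable 0 T) hpt
  have hlow : (∫ t in (0:ℝ)..T, (β₀ * (g t) ^ 2 - (m : ℝ) ^ 2 * M * A * A
      - (m : ℝ) ^ 2 * M * A * |g t|))
      = β₀ * S - (m : ℝ) ^ 2 * M * A * A * T - (m : ℝ) ^ 2 * M * A * A := by
    rw [intervalIntegral.integral_sub (hLint1.sub intervalIntegrable_const) hLint2,
      intervalIntegral.integral_sub hLint1 intervalIntegrable_const]
    simp only [intervalIntegral.integral_const_mul, intervalIntegral.integral_const,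
      smul_eq_mul, sub_zero]
    rw [← hSdef, ← hAdef]
    ring
  rw [hlow] at hmono
  -- Final arithmetic.
  set K := (m : ℝ) ^ 2 * M with hKdef
  have hKnn : 0 ≤ K := mul_nonneg (by positivity) hMnn
  have hAA : A * A ≤ T * S := by nlinarith [hCS]
  have e1 : K * A * A ≤ K * (T * S) := by nlinarith [mul_le_mul_of_nonneg_left hAA hKnn]
  have e2 : K * A * A * T ≤ K * (T * S) := by
    have h1 : K * A * A * T ≤ K * (T * S) * T :=
      mul_le_mul_of_nonneg_right e1 hT.le
    have h2 : K * (T * S) * T ≤ K * (T * S) * 1 :=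
      mul_le_mul_of_nonneg_left hT1 (mul_nonneg hKnn (mul_nonneg hT.le hSnn))
    linarith
  have h2K : 2 * K ≤ C := by
    rw [hKdef, hCdef]
    nlinarith [sq_nonneg (m : ℝ)]
  have e4 : 2 * K * (T * S) ≤ (β₀ / 2) * S := by
    have h5 : 2 * K * (T * S) ≤ C * (T * S) :=
      mul_le_mul_of_nonneg_right h2K (mul_nonneg hT.le hSnn)
    have h7 : (C * T) * S ≤ (β₀ / 2) * S := mul_le_mul_of_nonneg_right hCT hSnn
    nlinarith
  have goal' : (β₀ / 2) * S ≤ ∫ t in (0:ℝ)..T, ∑ i ∈ Finset.Icc 1 m, ∑ j ∈ Finset.Icc 1 m,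
      b i j t * iteratedDeriv i ξ t * iteratedDeriv j ξ t := by linarith
  exact goal'
end

section
/- Asymptotic root location for a perturbed quadratic in (T−t): let A, B, C ∈ ℝ with A ≠ 0 and B² − 4AC > 0, and let r(s, a) = o(s² + a²) as (s,a) → (0,0) be continuous. Then for each sufficiently small a ≠ 0 the equation A s² + B a s + C a² + r(s, a) = 0 has a solution s = s(a) satisfying s(a) = β a + o(a) for some root β ≠ 0 of A β² + B β + C = 0 (assuming the roots of Aβ²+Bβ+C are nonzero, i.e. C ≠ 0). -/
/-!
Take the root `β = (-B + √(B² - 4AC)) / (2A)`, at which `Aβ² + Bβ + C` has derivative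
`D = 2Aβ + B = √(B² - 4AC) > 0`. Along the line `s = (β + t) a` the quadratic part equals
`a² (D t + A t²)`, while `r((β + t) a, a) = o(a²)`. Hence for small `ε > 0` the left-hand side
changes sign between `t = -ε` and `t = ε` for all small `a`, and the intermediate value theorem
gives a solution with `|s - β a| ≤ ε |a|`. Choosing for each `a` a solution nearest to `β a`
makes a single `s(a)` work for every `ε`.
-/

open Filter Asymptotics Set Metric
open scoped Topology

theorem exists_eventually_mem_isLittleO_sub {α E F : Type*} [NormedAddCommGroup E]
    [ProperSpace E] [SeminormedAddGroup F] {l : Filter α} {Z : α → Set E}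
    (hZ : ∀ a, IsClosed (Z a)) {c : α → E} {g : α → F}
    (h : ∀ᶠ ε in 𝓝[>] (0 : ℝ), ∀ᶠ a in l, ∃ x ∈ Z a, ‖x - c a‖ ≤ ε * ‖g a‖) :
    ∃ s : α → E, (∀ᶠ a in l, s a ∈ Z a) ∧ (fun a => s a - c a) =o[l] g := by
  have hnearest : ∀ a, ∃ y : E,
      (Z a).Nonempty → y ∈ Z a ∧ infDist (c a) (Z a) = dist (c a) y := by
    intro a
    by_cases hne : (Z a).Nonempty
    · obtain ⟨y, hy, hdist⟩ := (hZ a).exists_infDist_eq_dist hne (c a)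
      exact ⟨y, fun _ => ⟨hy, hdist⟩⟩
    · exact ⟨0, fun h' => absurd h' hne⟩
  choose s hs using hnearest
  have hclose : ∀ a, ∀ x ∈ Z a, ‖s a - c a‖ ≤ ‖x - c a‖ := fun a x hx => by
    rw [← dist_eq_norm, dist_comm, ← (hs a ⟨x, hx⟩).2, ← dist_eq_norm, dist_comm]
    exact infDist_le_dist_of_mem hx
  refine ⟨s, ?_, isLittleO_iff.2 fun δ hδ => ?_⟩
  · obtain ⟨ε, hε⟩ := h.exists
    filter_upwards [hε] with a hx
    obtain ⟨x, hx, -⟩ := hx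
    exact (hs a ⟨x, hx⟩).1
  · obtain ⟨ε, hε, hεδ⟩ := (h.and (Ioo_mem_nhdsGT hδ)).exists
    filter_upwards [hε] with a hx
    obtain ⟨x, hx, hxc⟩ := hx
    calc ‖s a - c a‖ ≤ ‖x - c a‖ := hclose a x hx
      _ ≤ ε * ‖g a‖ := hxc
      _ ≤ δ * ‖g a‖ := mul_le_mul_of_nonneg_right hεδ.2.le (norm_nonneg _)

theorem Asymptotics.IsLittleO.comp_line {E : Type*} [Norm E] {r : ℝ × ℝ → E}
    (hr : r =o[𝓝 (0, 0)] fun p : ℝ × ℝ => p.1 ^ 2 + p.2 ^ 2) (γ : ℝ) :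
    (fun a : ℝ => r (γ * a, a)) =o[𝓝 0] fun a => a ^ 2 := by
  have hline : Tendsto (fun a : ℝ => (γ * a, a)) (𝓝 0) (𝓝 (0, 0)) := by
    simpa using ((continuous_const.mul continuous_id).prodMk continuous_id).tendsto (0 : ℝ)
  refine (hr.comp_tendsto hline).trans_isBigO (IsBigO.of_bound (γ ^ 2 + 1) ?_)
  filter_upwards with a
  simp only [Function.comp_apply, Real.norm_eq_abs]
  rw [abs_of_nonneg (by positivity), abs_of_nonneg (by positivity)]
  exact le_of_eq (by ring)

theorem exists_quadratic_root_deriv_eq_sqrt_discrim {A B C : ℝ} (hA : A ≠ 0)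
    (hdisc : 0 ≤ discrim A B C) :
    ∃ β : ℝ, A * β ^ 2 + B * β + C = 0 ∧ 2 * A * β + B = √(discrim A B C) := by
  have hderiv : 2 * A * ((√(discrim A B C) - B) / (2 * A)) + B = √(discrim A B C) := by
    field_simp
    ring
  refine ⟨_, ?_, hderiv⟩
  rw [sq, quadratic_eq_zero_iff_discrim_eq_sq hA, hderiv, Real.sq_sqrt hdisc]

section SimpleRoot

variable {A B C β ε : ℝ}

theorem quadratic_along_line (hroot : A * β ^ 2 + B * β + C = 0) (t a : ℝ) :
    A * ((β + t) * a) ^ 2 + B * a * ((β + t) * a) + C * a ^ 2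
      = a ^ 2 * ((2 * A * β + B) * t + A * t ^ 2) := by
  linear_combination a ^ 2 * hroot

theorem exists_root_near_line {r : ℝ × ℝ → ℝ} {a : ℝ}
    (hroot : A * β ^ 2 + B * β + C = 0) (hε : 0 ≤ ε)
    (hAε : |A| * ε ≤ (2 * A * β + B) / 2) (hcont : Continuous fun x => r (x, a))
    (hright : |r ((β + ε) * a, a)| ≤ (2 * A * β + B) * ε / 2 * a ^ 2)
    (hleft : |r ((β + -ε) * a, a)| ≤ (2 * A * β + B) * ε / 2 * a ^ 2) :
    ∃ x, A * x ^ 2 + B * a * x + C * a ^ 2 + r (x, a) = 0 ∧ |x - β * a| ≤ ε * |a| := by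
  set f : ℝ → ℝ := fun t => A * ((β + t) * a) ^ 2 + B * a * ((β + t) * a) + C * a ^ 2
    + r ((β + t) * a, a)
  have hf : ContinuousOn f (Icc (-ε) ε) :=
    ((by fun_prop : Continuous fun t : ℝ => A * ((β + t) * a) ^ 2 + B * a * ((β + t) * a))
      |>.add continuous_const |>.add (hcont.comp (by fun_prop))).continuousOn
  have hAεsq : |A| * ε ^ 2 ≤ (2 * A * β + B) * ε / 2 := by nlinarith
  have hupper : A * ε ^ 2 ≤ (2 * A * β + B) * ε / 2 :=
    (mul_le_mul_of_nonneg_right (le_abs_self A) (sq_nonneg ε)).trans hAεsq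
  have hlower : -((2 * A * β + B) * ε / 2) ≤ A * ε ^ 2 := by
    nlinarith [mul_le_mul_of_nonneg_right (neg_abs_le A) (sq_nonneg ε)]
  have hneg : f (-ε) ≤ 0 := by
    simp only [f, quadratic_along_line hroot]
    nlinarith [(abs_le.1 hleft).2, mul_le_mul_of_nonneg_left hupper (sq_nonneg a)]
  have hpos : 0 ≤ f ε := by
    simp only [f, quadratic_along_line hroot]
    nlinarith [(abs_le.1 hright).1, mul_le_mul_of_nonneg_left hlower (sq_nonneg a)]
  obtain ⟨t, ht, hft⟩ := intermediate_value_Icc (by linarith) hf ⟨hneg, hpos⟩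
  refine ⟨(β + t) * a, hft, ?_⟩
  rw [show (β + t) * a - β * a = t * a by ring, abs_mul]
  gcongr
  exact abs_le.2 ht

theorem eventually_exists_root_near_line {r : ℝ × ℝ → ℝ} (hrcont : Continuous r)
    (hr : r =o[𝓝 (0, 0)] fun p : ℝ × ℝ => p.1 ^ 2 + p.2 ^ 2)
    (hroot : A * β ^ 2 + B * β + C = 0) (hε : 0 < ε) (hAε : |A| * ε < (2 * A * β + B) / 2) :
    ∀ᶠ a in 𝓝 0,
      ∃ x, A * x ^ 2 + B * a * x + C * a ^ 2 + r (x, a) = 0 ∧ |x - β * a| ≤ ε * |a| := by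
  have hD : 0 < (2 * A * β + B) * ε / 2 := by
    have : 0 < 2 * A * β + B := by nlinarith [abs_nonneg A]
    positivity
  filter_upwards [(hr.comp_line (β + ε)).bound hD, (hr.comp_line (β + -ε)).bound hD]
    with a hright hleft
  simp only [Real.norm_eq_abs, abs_pow, sq_abs] at hright hleft
  exact exists_root_near_line hroot hε.le hAε.le (by fun_prop) hright hleft

end SimpleRoot

/-- Asymptotic root location for a perturbed quadratic: if `A ≠ 0`, `C ≠ 0` and
`B² − 4AC > 0`, and `r(s,a) = o(s² + a²)` at `(0,0)` with `r` continuous, then there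
is a nonzero root `β` of `Aβ² + Bβ + C = 0` and, for all sufficiently small `a ≠ 0`,
a solution `s(a)` of `A s² + B a s + C a² + r(s,a) = 0` with `s(a) = βa + o(a)`. -/
theorem perturbed_quadratic_root (A B C : ℝ) (hA : A ≠ 0) (hC : C ≠ 0)
    (hdisc : 0 < B ^ 2 - 4 * A * C)
    (r : ℝ × ℝ → ℝ) (hrcont : Continuous r)
    (hr : (fun p : ℝ × ℝ => r p) =o[𝓝 (0, 0)] fun p : ℝ × ℝ => p.1 ^ 2 + p.2 ^ 2) :
    ∃ β : ℝ, β ≠ 0 ∧ A * β ^ 2 + B * β + C = 0 ∧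
      ∃ s : ℝ → ℝ,
        (∀ᶠ a in 𝓝[≠] (0 : ℝ),
          A * (s a) ^ 2 + B * a * (s a) + C * a ^ 2 + r (s a, a) = 0) ∧
        (fun a => s a - β * a) =o[𝓝 (0 : ℝ)] fun a => a := by
  obtain ⟨β, hroot, hderiv⟩ := exists_quadratic_root_deriv_eq_sqrt_discrim hA hdisc.le
  have hβ : β ≠ 0 := by
    rintro rfl
    exact hC (by simpa using hroot)
  have hnear : ∀ᶠ ε in 𝓝[>] (0 : ℝ), ∀ᶠ a in 𝓝 0,
      ∃ x ∈ {x | A * x ^ 2 + B * a * x + C * a ^ 2 + r (x, a) = 0},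
        ‖x - β * a‖ ≤ ε * ‖a‖ := by
    have hD : 0 < (2 * A * β + B) / 2 / (|A| + 1) := by
      rw [hderiv]
      have := Real.sqrt_pos.2 hdisc
      positivity
    filter_upwards [Ioo_mem_nhdsGT hD] with ε ⟨hε, hεD⟩
    have hAε : |A| * ε < (2 * A * β + B) / 2 := by
      rw [lt_div_iff₀ (by positivity)] at hεD
      nlinarith [abs_nonneg A]
    exact eventually_exists_root_near_line hrcont hr hroot hε hAε
  have hclosed :
      ∀ a : ℝ, IsClosed {x | A * x ^ 2 + B * a * x + C * a ^ 2 + r (x, a) = 0} :=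
    fun a => isClosed_eq (by fun_prop) continuous_const
  obtain ⟨s, hs, hso⟩ := exists_eventually_mem_isLittleO_sub hclosed hnear
  exact ⟨β, hβ, hroot, s, hs.filter_mono nhdsWithin_le_nhds, hso⟩
end
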